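/- arXiv:1312.1756 — 9 statements merged into one kernel-verified Lean document; each statement's English description precedes it below -/
import Mathlib

section
/- For any channel gain g > 0 and noise power spectral density N₀ > 0, the rate utility function (b, p) ↦ b·log₂(1 + g·p/(b·N₀)) is concave on the convex set {(b, p) ∈ ℝ² : b > 0, p ≥ 0} (joint concavity in bandwidth b and power p). -/
/-!
Writing `c = g / N₀`, the rate utility is the perspective `b · f(p / b)` of the concave function
`f(x) = log₂(1 + c x)` on `x ≥ 0`, and the perspective of a concave function is jointly concave:
a convex combination of `(b₁, p₁)` and `(b₂, p₂)` with weights `a, t` rescales to the convex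
combination of `p₁ / b₁` and `p₂ / b₂` with weights proportional to `a b₁` and `t b₂`.
-/

open Set Real

lemma div_add_div_self_eq_one {K : Type*} [DivisionSemiring K] {u v : K} (h : u + v ≠ 0) :
    u / (u + v) + v / (u + v) = 1 := by
  rw [← add_div, div_self h]

lemma inv_smul_add_smul_eq_combo {𝕜 E : Type*} [Field 𝕜] [AddCommGroup E] [Module 𝕜 E]
    {a t b₁ b₂ : 𝕜} (hb₁ : b₁ ≠ 0) (hb₂ : b₂ ≠ 0)
    (hB : a * b₁ + t * b₂ ≠ 0) (x₁ x₂ : E) :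
    (a * b₁ + t * b₂)⁻¹ • (a • x₁ + t • x₂) =
      (a * b₁ / (a * b₁ + t * b₂)) • b₁⁻¹ • x₁ + (t * b₂ / (a * b₁ + t * b₂)) • b₂⁻¹ • x₂ := by
  simp only [smul_smul, smul_add]
  congr 2 <;> field_simp

theorem ConcaveOn.perspective {𝕜 E : Type*} [Field 𝕜] [LinearOrder 𝕜] [IsStrictOrderedRing 𝕜]
    [AddCommGroup E] [Module 𝕜 E] {s : Set E} {f : E → 𝕜} (hf : ConcaveOn 𝕜 s f) :
    ConcaveOn 𝕜 {q : 𝕜 × E | 0 < q.1 ∧ q.1⁻¹ • q.2 ∈ s} (fun q => q.1 * f (q.1⁻¹ • q.2)) := by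
  refine ⟨?convex, ?concave⟩
  case convex =>
    rintro ⟨b₁, x₁⟩ ⟨hb₁, hx₁⟩ ⟨b₂, x₂⟩ ⟨hb₂, hx₂⟩ a t ha ht hat
    have hB : 0 < a * b₁ + t * b₂ := convex_Ioi (0 : 𝕜) hb₁ hb₂ ha ht hat
    refine ⟨hB, ?_⟩
    simp only [Prod.smul_mk, Prod.mk_add_mk, smul_eq_mul]
    rw [inv_smul_add_smul_eq_combo hb₁.ne' hb₂.ne' hB.ne']
    exact hf.1 hx₁ hx₂ (by positivity) (by positivity) (div_add_div_self_eq_one hB.ne')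
  case concave =>
    rintro ⟨b₁, x₁⟩ ⟨hb₁, hx₁⟩ ⟨b₂, x₂⟩ ⟨hb₂, hx₂⟩ a t ha ht hat
    have hB : 0 < a * b₁ + t * b₂ := convex_Ioi (0 : 𝕜) hb₁ hb₂ ha ht hat
    simp only [Prod.smul_mk, Prod.mk_add_mk, smul_eq_mul]
    rw [inv_smul_add_smul_eq_combo hb₁.ne' hb₂.ne' hB.ne']
    have hf_combo := hf.2 hx₁ hx₂ (by positivity : 0 ≤ a * b₁ / (a * b₁ + t * b₂))
      (by positivity : 0 ≤ t * b₂ / (a * b₁ + t * b₂)) (div_add_div_self_eq_one hB.ne')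
    calc a * (b₁ * f (b₁⁻¹ • x₁)) + t * (b₂ * f (b₂⁻¹ • x₂))
        = (a * b₁ + t * b₂) * ((a * b₁ / (a * b₁ + t * b₂)) • f (b₁⁻¹ • x₁)
            + (t * b₂ / (a * b₁ + t * b₂)) • f (b₂⁻¹ • x₂)) := by
          simp only [smul_eq_mul]
          field_simp
      _ ≤ _ := mul_le_mul_of_nonneg_left hf_combo hB.le

lemma concaveOn_logb_one_add_mul {b c : ℝ} (hb : 1 ≤ b) (hc : 0 ≤ c) :
    ConcaveOn ℝ (Ici 0) (fun x => logb b (1 + c * x)) := by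
  have hlog : ConcaveOn ℝ (AffineMap.lineMap 1 (1 + c) ⁻¹' Ioi 0)
      (log ∘ AffineMap.lineMap (1 : ℝ) (1 + c)) :=
    strictConcaveOn_log_Ioi.concaveOn.comp_affineMap _
  have hsubset : Ici (0 : ℝ) ⊆ AffineMap.lineMap (1 : ℝ) (1 + c) ⁻¹' Ioi 0 :=
    fun x (hx : 0 ≤ x) => by
      simp only [mem_preimage, AffineMap.lineMap_apply_ring', add_sub_cancel_left, mem_Ioi]
      positivity
  refine ((hlog.subset hsubset (convex_Ici 0)).smul (inv_nonneg.2 (log_nonneg hb))).congr ?_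
  intro x _
  simp only [Function.comp_apply, AffineMap.lineMap_apply_ring', smul_eq_mul, logb]
  ring_nf

/-- For any channel gain `g > 0` and noise PSD `N₀ > 0`, the rate utility
`(b, p) ↦ b · log₂(1 + g·p/(b·N₀))` is concave on the convex set `{(b,p) : b > 0, p ≥ 0}`. -/
theorem rate_utility_concaveOn (g N₀ : ℝ) (hg : 0 < g) (hN₀ : 0 < N₀) :
    ConcaveOn ℝ {q : ℝ × ℝ | 0 < q.1 ∧ 0 ≤ q.2}
      (fun q : ℝ × ℝ => q.1 * Real.logb 2 (1 + g * q.2 / (q.1 * N₀))) := by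
  have hset : {q : ℝ × ℝ | 0 < q.1 ∧ 0 ≤ q.2} = {q | 0 < q.1 ∧ q.1⁻¹ • q.2 ∈ Ici 0} := by
    ext ⟨b, p⟩
    exact and_congr_right fun hb => (mul_nonneg_iff_of_pos_left (inv_pos.2 hb)).symm
  rw [hset]
  refine (concaveOn_logb_one_add_mul one_le_two (div_nonneg hg.le hN₀.le)).perspective.congr ?_
  rintro ⟨b, p⟩ -
  simp only [smul_eq_mul]
  ring_nf
end

section
/- For any channel gain g > 0, noise power spectral density N₀ > 0 and any fixed power p > 0, the function b ↦ b·log₂(1 + g·p/(b·N₀)) is strictly increasing on (0, ∞). -/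
/-!
Writing `c = g p / N₀`, the rate is `b log₂ (1 + c / b) = (c / log 2) · φ (c / b)` with
`φ t = log (1 + t) / t`. This `φ` is the slope of the secant of the strictly concave `log`
through `1` and `1 + t`, hence strictly decreasing; since `c / b` decreases in `b`, the rate
increases.
-/

open Real Set

theorem strictAntiOn_log_one_add_div_self :
    StrictAntiOn (fun t : ℝ => log (1 + t) / t) (Ioi 0) := by
  intro s (hs : 0 < s) t (ht : 0 < t) hst
  have key := strictConcaveOn_log_Ioi.secant_strict_mono (a := 1) (x := 1 + s) (y := 1 + t)
    (mem_Ioi.mpr one_pos) (mem_Ioi.mpr (by linarith)) (mem_Ioi.mpr (by linarith))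
    (by linarith) (by linarith) (by linarith)
  simpa only [log_one, sub_zero, add_sub_cancel_left] using key

theorem strictMonoOn_mul_log_one_add_div {c : ℝ} (hc : 0 < c) :
    StrictMonoOn (fun b : ℝ => b * log (1 + c / b)) (Ioi 0) := by
  have hdiv : StrictAntiOn (fun b : ℝ => c / b) (Ioi 0) := fun a ha b hb hab =>
    div_lt_div_of_pos_left hc ha hab
  have hcomp := strictAntiOn_log_one_add_div_self.comp hdiv fun b (hb : 0 < b) => div_pos hc hb
  intro a ha b hb hab
  have key : c * (log (1 + c / a) / (c / a)) < c * (log (1 + c / b) / (c / b)) :=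
    mul_lt_mul_of_pos_left (hcomp ha hb hab) hc
  have hrw : ∀ x : ℝ, 0 < x → c * (log (1 + c / x) / (c / x)) = x * log (1 + c / x) := by
    intro x hx
    field_simp
  rwa [hrw a ha, hrw b hb] at key

theorem strictMonoOn_mul_logb_one_add_div {β c : ℝ} (hβ : 1 < β) (hc : 0 < c) :
    StrictMonoOn (fun b : ℝ => b * logb β (1 + c / b)) (Ioi 0) := by
  intro a ha b hb hab
  simp only [logb, ← mul_div_assoc]
  exact div_lt_div_of_pos_right (strictMonoOn_mul_log_one_add_div hc ha hb hab) (log_pos hβ)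

/-- For `g > 0`, `N₀ > 0` and fixed power `p > 0`, the function
`b ↦ b · log₂(1 + g·p/(b·N₀))` is strictly increasing on `(0, ∞)`. -/
theorem rate_utility_strictMonoOn_bandwidth (g N₀ p : ℝ)
    (hg : 0 < g) (hN₀ : 0 < N₀) (hp : 0 < p) :
    StrictMonoOn (fun b : ℝ => b * Real.logb 2 (1 + g * p / (b * N₀))) (Set.Ioi 0) := by
  have hsnr : ∀ b : ℝ, g * p / (b * N₀) = g * p / N₀ / b := fun b => by
    rw [div_div, mul_comm N₀]
  simp only [hsnr]
  exact strictMonoOn_mul_logb_one_add_div one_lt_two (by positivity)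
end

section
/- For any r > 0, the function f_r(b) = b·(2^{r/b} − 1) is strictly convex on (0, ∞). -/
/-!
`f_r(b) = b · g(r / b)` with `g(x) = 2^x - 1` strictly convex: `f_r` is the perspective of `g`
restricted to the ray of fixed numerator `r ≠ 0`, and at `t = a x + b y` the point `r / t` is the
convex combination of `r / x` and `r / y` with weights `a x / t`, `b y / t`.
-/

open Set Real

theorem strictConvexOn_rpow_left {b : ℝ} (hb : 1 < b) :
    StrictConvexOn ℝ univ fun x : ℝ => b ^ x := by
  refine ⟨convex_univ, fun x _ y _ hxy s t hs ht hst => ?_⟩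
  have hlog : 0 < log b := log_pos hb
  have hne : log b * x ≠ log b * y := (mul_right_injective₀ hlog.ne').ne hxy
  simp only [rpow_def_of_pos (zero_lt_one.trans hb), smul_eq_mul]
  calc exp (log b * (s * x + t * y)) = exp (s * (log b * x) + t * (log b * y)) := by ring_nf
    _ < s * exp (log b * x) + t * exp (log b * y) :=
      strictConvexOn_exp.2 trivial trivial hne hs ht hst

theorem StrictConvexOn.perspective {E : Type*} [AddCommGroup E] [Module ℝ E] {g : E → ℝ}
    (hg : StrictConvexOn ℝ univ g) {c : E} (hc : c ≠ 0) :
    StrictConvexOn ℝ (Ioi 0) fun t : ℝ => t * g (t⁻¹ • c) := by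
  refine ⟨convex_Ioi 0, fun x (hx : 0 < x) y (hy : 0 < y) hxy a b ha hb hab => ?_⟩
  simp only [smul_eq_mul]
  set t := a * x + b * y
  have ht : 0 < t := by positivity
  have hweights : a * x / t + b * y / t = 1 := by rw [← add_div, div_self ht.ne']
  have hmix : t⁻¹ • c = (a * x / t) • (x⁻¹ • c) + (b * y / t) • (y⁻¹ • c) := by
    rw [smul_smul, smul_smul, ← add_smul]
    congr 1
    field_simp
    exact hab.symm
  have hne : x⁻¹ • c ≠ y⁻¹ • c := fun h => hxy (inv_injective (smul_left_injective ℝ hc h))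
  calc t * g (t⁻¹ • c)
      < t * ((a * x / t) * g (x⁻¹ • c) + (b * y / t) * g (y⁻¹ • c)) := by
        rw [hmix]
        exact mul_lt_mul_of_pos_left
          (hg.2 trivial trivial hne (by positivity) (by positivity) hweights) ht
    _ = a * (x * g (x⁻¹ • c)) + b * (y * g (y⁻¹ • c)) := by field_simp

/-- For any `r > 0`, the function `f_r(b) = b·(2^{r/b} − 1)` is strictly
convex on `(0, ∞)`. -/
theorem min_power_strictConvexOn (r : ℝ) (hr : 0 < r) :
    StrictConvexOn ℝ (Set.Ioi 0) (fun b : ℝ => b * ((2 : ℝ) ^ (r / b) - 1)) := by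
  convert ((strictConvexOn_rpow_left one_lt_two).add_const (-1)).perspective hr.ne' using 3 with b
  simp [div_eq_inv_mul, sub_eq_add_neg]
end

section
/- For any r > 0, g > 0, N₀ > 0 and any water level ν > 0, there exists a unique b > 0 satisfying the stationarity (KKT) equation (N₀/g)·( (r·ln 2 / b)·2^{r/b} − (2^{r/b} − 1) ) = ν; that is, the marginal power saving of extra bandwidth equals ν at exactly one bandwidth value. -/
/-!
With `t = r·ln 2 / b`, so that `2^{r/b} = e^t`, the left-hand side is `(N₀/g)·φ(t)` for
`φ(t) = t·eᵗ − (eᵗ − 1)`. Since `φ(0) = 0`, `φ'(t) = t·eᵗ > 0` for `t > 0` and `φ → ∞`, `φ` is a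
bijection of `(0, ∞)` onto itself, and so is `b ↦ r·ln 2 / b`.
-/

open Real Set Filter

noncomputable section

/-- The gap at `0` between `exp` and its tangent line at `t`. -/
def expTangentGap (t : ℝ) : ℝ := t * exp t - (exp t - 1)

@[simp]
lemma expTangentGap_zero : expTangentGap 0 = 0 := by simp [expTangentGap]

@[fun_prop]
lemma continuous_expTangentGap : Continuous expTangentGap := by
  unfold expTangentGap; fun_prop

lemma hasDerivAt_expTangentGap (t : ℝ) : HasDerivAt expTangentGap (t * exp t) t := by
  have h : HasDerivAt expTangentGap (1 * exp t + t * exp t - exp t) t :=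
    ((hasDerivAt_id' t).mul (hasDerivAt_exp t)).sub ((hasDerivAt_exp t).sub_const 1)
  exact h.congr_deriv (by ring)

lemma strictMonoOn_expTangentGap : StrictMonoOn expTangentGap (Ici 0) := by
  refine strictMonoOn_of_deriv_pos (convex_Ici 0) continuous_expTangentGap.continuousOn ?_
  intro t ht
  rw [interior_Ici, mem_Ioi] at ht
  rw [(hasDerivAt_expTangentGap t).deriv]
  positivity

lemma tendsto_expTangentGap_atTop : Tendsto expTangentGap atTop atTop := by
  have h : expTangentGap = fun t => (t - 1) * exp t + 1 := by
    funext t; unfold expTangentGap; ring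
  rw [h]
  exact ((tendsto_atTop_add_const_right _ (-1) tendsto_id).atTop_mul_atTop₀
    tendsto_exp_atTop).atTop_add tendsto_const_nhds

lemma existsUnique_pos_expTangentGap_eq {c : ℝ} (hc : 0 < c) :
    ∃! t, 0 < t ∧ expTangentGap t = c := by
  obtain ⟨t, ht, hct⟩ := intermediate_value_Ici continuous_expTangentGap.continuousOn
    tendsto_expTangentGap_atTop (a := 0) (by simpa using hc.le)
  have ht_pos : 0 < t := lt_of_le_of_ne ht (by rintro rfl; simp [← hct] at hc)
  refine ⟨t, ⟨ht_pos, hct⟩, fun s ⟨hs, hsc⟩ => ?_⟩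
  exact strictMonoOn_expTangentGap.injOn hs.le ht (hsc.trans hct.symm)

lemma mul_div_mul_rpow_sub_eq_expTangentGap {a : ℝ} (ha : 0 < a) (r b : ℝ) :
    (r * log a / b) * a ^ (r / b) - (a ^ (r / b) - 1) = expTangentGap (r * log a / b) := by
  rw [expTangentGap, rpow_def_of_pos ha]
  ring_nf

lemma existsUnique_pos_div_of_existsUnique_pos {k : ℝ} (hk : 0 < k) {p : ℝ → Prop}
    (h : ∃! t, 0 < t ∧ p t) : ∃! b, 0 < b ∧ p (k / b) := by
  obtain ⟨t, ⟨ht, hpt⟩, huniq⟩ := h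
  refine ⟨k / t, ⟨by positivity, by rwa [div_div_cancel₀ hk.ne']⟩, ?_⟩
  rintro b ⟨hb, hpb⟩
  rw [← huniq (k / b) ⟨by positivity, hpb⟩, div_div_cancel₀ hk.ne']

end

/-- For any `r > 0`, `g > 0`, `N₀ > 0` and water level `ν > 0`, there is a
unique `b > 0` with `(N₀/g)·((r·ln 2 / b)·2^{r/b} − (2^{r/b} − 1)) = ν`. -/
theorem kkt_unique_bandwidth (r g N₀ ν : ℝ)
    (hr : 0 < r) (hg : 0 < g) (hN₀ : 0 < N₀) (hν : 0 < ν) :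
    ∃! b : ℝ, 0 < b ∧
      (N₀ / g) * ((r * Real.log 2 / b) * (2 : ℝ) ^ (r / b) - ((2 : ℝ) ^ (r / b) - 1)) = ν := by
  have hNg : 0 < N₀ / g := by positivity
  simp only [mul_div_mul_rpow_sub_eq_expTangentGap two_pos, ← eq_div_iff_mul_eq hNg.ne',
    mul_comm (N₀ / g)]
  exact existsUnique_pos_div_of_existsUnique_pos (by positivity)
    (existsUnique_pos_expTangentGap_eq (by positivity))
end

section
/- In the single-system cost minimization problem (P2), every optimal solution uses all resources tightly: if (E, G, (p_k), (b_k)) minimizes the cost α^E·E + α^G·G over the feasible set, then Σ_{k∈K} b_k = W, the QoS constraint holds with equality b_k·log₂(1 + g_k·p_k/(b_k·N₀)) = r_k for every k ∈ K, and the power balance holds with equality Σ_{k∈K} p_k + P_c = E + G. -/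
/-- Feasible set of the single-system cost minimization problem (P2). -/
def P2Feasible {ι : Type*} (K : Finset ι) (g r : ι → ℝ) (N₀ W Pc Ebar : ℝ)
    (E G : ℝ) (p b : ι → ℝ) : Prop :=
  0 ≤ E ∧ 0 ≤ G ∧ (∀ k ∈ K, 0 ≤ p k) ∧ (∀ k ∈ K, 0 < b k) ∧
    (∑ k ∈ K, p k) + Pc ≤ E + G ∧ E ≤ Ebar ∧ (∑ k ∈ K, b k) ≤ W ∧
    ∀ k ∈ K, r k ≤ b k * Real.logb 2 (1 + g k * p k / (b k * N₀))

lemma concave_log_aux {c θ : ℝ} (hc : 0 ≤ c) (h0 : 0 ≤ θ) (h1 : θ ≤ 1) :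
    θ * Real.log (1 + c) ≤ Real.log (1 + θ * c) := by
  have hx : (1 + c) ∈ Set.Ioi (0:ℝ) := by simp only [Set.mem_Ioi]; linarith
  have h1' : (1:ℝ) ∈ Set.Ioi (0:ℝ) := by norm_num
  have h := strictConcaveOn_log_Ioi.concaveOn.2 hx h1' h0
    (by linarith : (0:ℝ) ≤ 1 - θ) (by ring)
  simp only [smul_eq_mul, Real.log_one, mul_zero, add_zero, mul_one] at h
  have heq : θ * (1 + c) + (1 - θ) = 1 + θ * c := by ring
  rw [heq] at h
  linarith

lemma strict_concave_log_aux {c θ : ℝ} (hc : 0 < c) (h0 : 0 < θ) (h1 : θ < 1) :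
    θ * Real.log (1 + c) < Real.log (1 + θ * c) := by
  have hx : (1 + c) ∈ Set.Ioi (0:ℝ) := by simp only [Set.mem_Ioi]; linarith
  have h1' : (1:ℝ) ∈ Set.Ioi (0:ℝ) := by norm_num
  have hne : (1 + c) ≠ 1 := by linarith
  have h := strictConcaveOn_log_Ioi.2 hx h1' hne h0
    (by linarith : (0:ℝ) < 1 - θ) (by ring)
  simp only [smul_eq_mul, Real.log_one, mul_zero, add_zero, mul_one] at h
  have heq : θ * (1 + c) + (1 - θ) = 1 + θ * c := by ring
  rw [heq] at h
  linarith

lemma concave_logb_aux {c θ : ℝ} (hc : 0 ≤ c) (h0 : 0 ≤ θ) (h1 : θ ≤ 1) :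
    θ * Real.logb 2 (1 + c) ≤ Real.logb 2 (1 + θ * c) := by
  have h2 : (0:ℝ) < Real.log 2 := Real.log_pos (by norm_num)
  have h := concave_log_aux hc h0 h1
  rw [Real.logb, Real.logb, ← mul_div_assoc]
  exact div_le_div_of_nonneg_right h h2.le

lemma strict_concave_logb_aux {c θ : ℝ} (hc : 0 < c) (h0 : 0 < θ) (h1 : θ < 1) :
    θ * Real.logb 2 (1 + c) < Real.logb 2 (1 + θ * c) := by
  have h2 : (0:ℝ) < Real.log 2 := Real.log_pos (by norm_num)
  have h := strict_concave_log_aux hc h0 h1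
  rw [Real.logb, Real.logb, ← mul_div_assoc]
  exact div_lt_div_of_pos_right h h2

lemma p_pos_of_qos {g p b N₀ r : ℝ} (hr : 0 < r) (hp : 0 ≤ p)
    (hq : r ≤ b * Real.logb 2 (1 + g * p / (b * N₀))) : 0 < p := by
  rcases hp.eq_or_lt with h | h
  · exfalso; rw [← h] at hq; simp [Real.logb] at hq; linarith
  · exact h

lemma budget_reduce {αE αG E G S : ℝ} (hαE : 0 < αE) (hα : αE < αG)
    (hE : 0 ≤ E) (hG : 0 ≤ G) (hS : 0 ≤ S) (hslack : S < E + G) :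
    ∃ E' G', 0 ≤ E' ∧ 0 ≤ G' ∧ E' ≤ E ∧ S ≤ E' + G' ∧
      αE * E' + αG * G' < αE * E + αG * G := by
  rcases lt_or_eq_of_le hG with hG' | hG'
  · refine ⟨E, max (S - E) 0, hE, le_max_right _ _, le_rfl, ?_, ?_⟩
    · rcases le_total (S - E) 0 with h | h
      · rw [max_eq_right h]; linarith
      · rw [max_eq_left h]; linarith
    · have : max (S - E) 0 < G := by
        rcases le_total (S - E) 0 with h | h
        · rw [max_eq_right h]; exact hG'
        · rw [max_eq_left h]; linarith
      nlinarith
  · refine ⟨S, 0, hS, le_rfl, by linarith, by linarith, ?_⟩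
    nlinarith

lemma qos_slack_cheaper {ι : Type*} [DecidableEq ι] (K : Finset ι) (g r : ι → ℝ)
    (hg : ∀ k ∈ K, 0 < g k) (hr : ∀ k ∈ K, 0 < r k)
    (N₀ W Pc Ebar αE αG : ℝ) (hN₀ : 0 < N₀) (hPc : 0 ≤ Pc)
    (hαE : 0 < αE) (hα : αE < αG)
    (E G : ℝ) (p b : ι → ℝ)
    (hfeas : P2Feasible K g r N₀ W Pc Ebar E G p b)
    (k0 : ι) (hk0 : k0 ∈ K)
    (hslack : r k0 < b k0 * Real.logb 2 (1 + g k0 * p k0 / (b k0 * N₀))) :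
    ∃ E' G' p', P2Feasible K g r N₀ W Pc Ebar E' G' p' b ∧
      αE * E' + αG * G' < αE * E + αG * G := by
  obtain ⟨hE, hG, hp, hb, hpow, hEb, hbw, hqos⟩ := hfeas
  set R := b k0 * Real.logb 2 (1 + g k0 * p k0 / (b k0 * N₀)) with hR
  have hrk0 := hr k0 hk0
  have hRpos : 0 < R := lt_trans hrk0 hslack
  have hpk0 : 0 < p k0 := p_pos_of_qos hrk0 (hp k0 hk0) (hqos k0 hk0)
  have hbk0 := hb k0 hk0
  set θ := r k0 / R with hθ
  have hθ0 : 0 < θ := div_pos hrk0 hRpos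
  have hθ1 : θ < 1 := (div_lt_one hRpos).mpr hslack
  set c := g k0 * p k0 / (b k0 * N₀) with hc
  have hc0 : 0 ≤ c := by
    apply div_nonneg
    · nlinarith [hp k0 hk0, hpk0, hg k0 hk0]
    · positivity
  set p' := Function.update p k0 (θ * p k0) with hp'
  have hsum : (∑ k ∈ K, p' k) = θ * p k0 + ∑ k ∈ K \ {k0}, p k := by
    rw [hp', Finset.sum_update_of_mem hk0]
  have hsum2 : (∑ k ∈ K, p k) = p k0 + ∑ k ∈ K \ {k0}, p k := by
    rw [Finset.sdiff_singleton_eq_erase, Finset.add_sum_erase _ _ hk0]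
  have hsumlt : (∑ k ∈ K, p' k) < ∑ k ∈ K, p k := by
    rw [hsum, hsum2]
    have : θ * p k0 < p k0 := by nlinarith
    linarith
  have hp'nonneg : ∀ k ∈ K, 0 ≤ p' k := by
    intro k hk
    rcases eq_or_ne k k0 with h | h
    · subst h; rw [hp', Function.update_self]; positivity
    · rw [hp', Function.update_of_ne h]; exact hp k hk
  have hp'sum_nonneg : 0 ≤ ∑ k ∈ K, p' k := Finset.sum_nonneg hp'nonneg
  have hS : (∑ k ∈ K, p' k) + Pc < E + G := by linarith
  obtain ⟨E', G', hE', hG', hE'le, hS', hcost⟩ :=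
    budget_reduce hαE hα hE hG (by linarith : 0 ≤ (∑ k ∈ K, p' k) + Pc) hS
  refine ⟨E', G', p', ⟨hE', hG', hp'nonneg, hb, hS', hE'le.trans hEb, hbw, ?_⟩, hcost⟩
  intro k hk
  rcases eq_or_ne k k0 with h | h
  · subst h
    rw [hp', Function.update_self]
    have harg : g k * (θ * p k) / (b k * N₀) = θ * c := by
      rw [hc]; ring
    rw [harg]
    have h1 := concave_logb_aux hc0 hθ0.le hθ1.le
    have h2 : θ * R ≤ b k * Real.logb 2 (1 + θ * c) := by
      rw [hR]
      nlinarith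
    have h3 : θ * R = r k := by
      rw [hθ]; field_simp
    linarith
  · rw [hp', Function.update_of_ne h]; exact hqos k hk

/-- Every optimal solution of (P2) uses all resources tightly:
the total bandwidth, each QoS constraint, and the power balance hold with equality. -/
theorem P2_optimal_is_tight {ι : Type*} (K : Finset ι) (hK : K.Nonempty)
    (g r : ι → ℝ) (hg : ∀ k ∈ K, 0 < g k) (hr : ∀ k ∈ K, 0 < r k)
    (N₀ W Pc Ebar αE αG : ℝ) (hN₀ : 0 < N₀) (hW : 0 < W) (hPc : 0 ≤ Pc)
    (hEbar : 0 ≤ Ebar) (hαE : 0 < αE) (hα : αE < αG)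
    (E G : ℝ) (p b : ι → ℝ)
    (hfeas : P2Feasible K g r N₀ W Pc Ebar E G p b)
    (hopt : ∀ E' G' : ℝ, ∀ p' b' : ι → ℝ,
      P2Feasible K g r N₀ W Pc Ebar E' G' p' b' →
        αE * E + αG * G ≤ αE * E' + αG * G') :
    (∑ k ∈ K, b k) = W ∧
    (∀ k ∈ K, b k * Real.logb 2 (1 + g k * p k / (b k * N₀)) = r k) ∧
    (∑ k ∈ K, p k) + Pc = E + G := by
  classical
  obtain ⟨hE, hG, hp, hb, hpow, hEb, hbw, hqos⟩ := hfeas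
  have hfeas' : P2Feasible K g r N₀ W Pc Ebar E G p b :=
    ⟨hE, hG, hp, hb, hpow, hEb, hbw, hqos⟩
  -- power balance tight
  have hbal : (∑ k ∈ K, p k) + Pc = E + G := by
    by_contra h
    have hlt : (∑ k ∈ K, p k) + Pc < E + G := lt_of_le_of_ne hpow h
    have hpsum : 0 ≤ ∑ k ∈ K, p k := Finset.sum_nonneg hp
    obtain ⟨E', G', hE', hG', hE'le, hS', hcost⟩ :=
      budget_reduce hαE hα hE hG (by linarith) hlt
    have := hopt E' G' p b ⟨hE', hG', hp, hb, hS', hE'le.trans hEb, hbw, hqos⟩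
    linarith
  -- QoS tight
  have hqeq : ∀ k ∈ K, b k * Real.logb 2 (1 + g k * p k / (b k * N₀)) = r k := by
    intro k hk
    by_contra h
    have hlt : r k < b k * Real.logb 2 (1 + g k * p k / (b k * N₀)) :=
      lt_of_le_of_ne (hqos k hk) (Ne.symm h)
    obtain ⟨E', G', p', hfeas'', hcost⟩ :=
      qos_slack_cheaper K g r hg hr N₀ W Pc Ebar αE αG hN₀ hPc hαE hα
        E G p b hfeas' k hk hlt
    have := hopt E' G' p' b hfeas''
    linarith
  -- bandwidth tight
  have hbweq : (∑ k ∈ K, b k) = W := by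
    by_contra h
    have hlt : (∑ k ∈ K, b k) < W := lt_of_le_of_ne hbw h
    obtain ⟨k0, hk0⟩ := hK
    set s := W - ∑ k ∈ K, b k with hs_def
    have hs : 0 < s := by rw [hs_def]; linarith
    have hbk0 := hb k0 hk0
    have hpk0 : 0 < p k0 := p_pos_of_qos (hr k0 hk0) (hp k0 hk0) (hqos k0 hk0)
    set b' := Function.update b k0 (b k0 + s) with hb'def
    have hb'pos : ∀ k ∈ K, 0 < b' k := by
      intro k hk
      rcases eq_or_ne k k0 with hh | hh
      · subst hh; rw [hb'def, Function.update_self]; linarith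
      · rw [hb'def, Function.update_of_ne hh]; exact hb k hk
    have hsumb' : (∑ k ∈ K, b' k) = W := by
      rw [hb'def, Finset.sum_update_of_mem hk0, Finset.sdiff_singleton_eq_erase]
      have : (∑ k ∈ K.erase k0, b k) = (∑ k ∈ K, b k) - b k0 := by
        rw [← Finset.add_sum_erase _ _ hk0]; ring
      rw [this, hs_def]; ring
    set θ := b k0 / (b k0 + s) with hθ
    have hθ0 : 0 < θ := div_pos hbk0 (by linarith)
    have hθ1 : θ < 1 := (div_lt_one (by linarith)).mpr (by linarith)
    set c := g k0 * p k0 / (b k0 * N₀) with hc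
    have hc0 : 0 < c := by
      apply div_pos
      · exact mul_pos (hg k0 hk0) hpk0
      · positivity
    have harg : g k0 * p k0 / (b' k0 * N₀) = θ * c := by
      rw [hb'def, Function.update_self, hθ, hc]
      field_simp
    have hstrict : r k0 < b' k0 * Real.logb 2 (1 + g k0 * p k0 / (b' k0 * N₀)) := by
      rw [harg]
      have h1 := strict_concave_logb_aux hc0 hθ0 hθ1
      have hb'k0 : b' k0 = b k0 + s := by rw [hb'def, Function.update_self]
      have h2 : (b k0 + s) * (θ * Real.logb 2 (1 + c)) <
          (b k0 + s) * Real.logb 2 (1 + θ * c) :=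
        mul_lt_mul_of_pos_left h1 (by linarith)
      have h3 : (b k0 + s) * θ = b k0 := by
        rw [hθ]; field_simp
      have h4 : b k0 * Real.logb 2 (1 + c) < (b k0 + s) * Real.logb 2 (1 + θ * c) := by
        have he : b k0 * Real.logb 2 (1 + c) = (b k0 + s) * θ * Real.logb 2 (1 + c) := by
          rw [h3]
        rw [he, mul_assoc]
        exact h2
      have h5 := hqos k0 hk0
      rw [← hc] at h5
      rw [hb'k0]
      linarith
    have hqos' : ∀ k ∈ K, r k ≤ b' k * Real.logb 2 (1 + g k * p k / (b' k * N₀)) := by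
      intro k hk
      rcases eq_or_ne k k0 with hh | hh
      · subst hh; exact hstrict.le
      · rw [hb'def, Function.update_of_ne hh]; exact hqos k hk
    have hfeasb' : P2Feasible K g r N₀ W Pc Ebar E G p b' :=
      ⟨hE, hG, hp, hb'pos, hpow, hEb, le_of_eq hsumb', hqos'⟩
    obtain ⟨E', G', p', hfeas'', hcost⟩ :=
      qos_slack_cheaper K g r hg hr N₀ W Pc Ebar αE αG hN₀ hPc hαE hα
        E G p b' hfeasb' k0 hk0 hstrict
    have := hopt E' G' p' b' hfeas''
    linarith
  exact ⟨hbweq, hqeq, hbal⟩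
end

section
/- Let μ₁, μ₂, λ₁, λ₂ > 0 and 0 < β_E ≤ 1, and define the marginal-cost gradient vectors v₁ = (μ₁, −β_E·μ₁, λ₁, −λ₁) and v₂ = (−β_E·μ₂, μ₂, −λ₂, λ₂) in ℝ⁴. Then there exists a direction d ∈ ℝ⁴ with all components nonnegative such that ⟨v₁, d⟩ < 0 and ⟨v₂, d⟩ < 0 if and only if β_E·λ₁·μ₂ > λ₂·μ₁ or β_E·λ₂·μ₁ > λ₁·μ₂. (This is the partial-cooperation condition of Proposition 5.2 when e₁ = e₂ = 0: both systems' costs can be simultaneously decreased by a small nonnegative adjustment of the exchange vector if and only if λ₁/μ₁ > λ₂/(μ₂·β_E) or λ₂/μ₂ > λ₁/(μ₁·β_E).) -/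
/-!
Weighting system 1's first-order cost change by `λ₂` and system 2's by `λ₁` cancels the
bandwidth terms (bandwidth moves without loss) and leaves
`(λ₂μ₁ - βE λ₁μ₂) d₁ + (λ₁μ₂ - βE λ₂μ₁) d₂`. If both coefficients are nonnegative, no
nonnegative direction lowers both costs. If one is negative, trading energy in one direction
against bandwidth in the other, at a price strictly between the two systems' marginal rates
of substitution, lowers both costs.
-/

section PartialCooperation

variable {μ₁ μ₂ l₁ l₂ βE : ℝ}

lemma weighted_cost_change_eq (d₁ d₂ d₃ d₄ : ℝ) :
    l₂ * (μ₁ * d₁ + (-(βE * μ₁)) * d₂ + l₁ * d₃ + (-l₁) * d₄) +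
        l₁ * ((-(βE * μ₂)) * d₁ + μ₂ * d₂ + (-l₂) * d₃ + l₂ * d₄) =
      (l₂ * μ₁ - βE * l₁ * μ₂) * d₁ + (l₁ * μ₂ - βE * l₂ * μ₁) * d₂ := by
  ring

lemma not_both_cost_changes_neg (hl₁ : 0 < l₁) (hl₂ : 0 < l₂)
    (h₁ : βE * l₁ * μ₂ ≤ l₂ * μ₁) (h₂ : βE * l₂ * μ₁ ≤ l₁ * μ₂)
    {d₁ d₂ d₃ d₄ : ℝ} (hd₁ : 0 ≤ d₁) (hd₂ : 0 ≤ d₂)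
    (hc₁ : μ₁ * d₁ + (-(βE * μ₁)) * d₂ + l₁ * d₃ + (-l₁) * d₄ < 0) :
    0 ≤ (-(βE * μ₂)) * d₁ + μ₂ * d₂ + (-l₂) * d₃ + l₂ * d₄ := by
  by_contra! hc₂
  have hneg : l₂ * (μ₁ * d₁ + (-(βE * μ₁)) * d₂ + l₁ * d₃ + (-l₁) * d₄) +
      l₁ * ((-(βE * μ₂)) * d₁ + μ₂ * d₂ + (-l₂) * d₃ + l₂ * d₄) < 0 :=
    add_neg (mul_neg_of_pos_of_neg hl₂ hc₁) (mul_neg_of_pos_of_neg hl₁ hc₂)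
  have hnonneg : 0 ≤ (l₂ * μ₁ - βE * l₁ * μ₂) * d₁ + (l₁ * μ₂ - βE * l₂ * μ₁) * d₂ :=
    add_nonneg (mul_nonneg (sub_nonneg.mpr h₁) hd₁) (mul_nonneg (sub_nonneg.mpr h₂) hd₂)
  rw [weighted_cost_change_eq] at hneg
  linarith

/-- System 1 gives `2 λ₁ λ₂` units of energy and is paid `λ₂ μ₁ + βE λ₁ μ₂` units of
bandwidth, the midpoint between the two systems' prices `2 λ₂ μ₁` and `2 βE λ₁ μ₂`. -/
lemma exists_energy_for_bandwidth_trade (hμ₁ : 0 < μ₁) (hl₁ : 0 < l₁) (hl₂ : 0 < l₂)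
    (h : βE * l₁ * μ₂ > l₂ * μ₁) :
    ∃ e w : ℝ, 0 ≤ e ∧ 0 ≤ w ∧ μ₁ * e - l₁ * w < 0 ∧ l₂ * w - βE * μ₂ * e < 0 := by
  refine ⟨2 * l₁ * l₂, l₂ * μ₁ + βE * l₁ * μ₂, by positivity, by linarith [mul_pos hl₂ hμ₁],
    ?_, ?_⟩
  · have : l₁ * (l₂ * μ₁ - βE * l₁ * μ₂) < 0 := mul_neg_of_pos_of_neg hl₁ (by linarith)
    linarith
  · have : l₂ * (l₂ * μ₁ - βE * l₁ * μ₂) < 0 := mul_neg_of_pos_of_neg hl₂ (by linarith)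
    linarith

end PartialCooperation

theorem partial_cooperation_condition_no_energy_exchange_general
    (μ₁ μ₂ l₁ l₂ βE : ℝ) (hμ₁ : 0 < μ₁) (hμ₂ : 0 < μ₂) (hl₁ : 0 < l₁) (hl₂ : 0 < l₂) :
    (∃ d₁ d₂ d₃ d₄ : ℝ, 0 ≤ d₁ ∧ 0 ≤ d₂ ∧ 0 ≤ d₃ ∧ 0 ≤ d₄ ∧
      μ₁ * d₁ + (-(βE * μ₁)) * d₂ + l₁ * d₃ + (-l₁) * d₄ < 0 ∧
      (-(βE * μ₂)) * d₁ + μ₂ * d₂ + (-l₂) * d₃ + l₂ * d₄ < 0) ↔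
    (βE * l₁ * μ₂ > l₂ * μ₁ ∨ βE * l₂ * μ₁ > l₁ * μ₂) := by
  constructor
  · rintro ⟨d₁, d₂, d₃, d₄, hd₁, hd₂, -, -, hc₁, hc₂⟩
    by_contra! h
    exact hc₂.not_ge (not_both_cost_changes_neg hl₁ hl₂ h.1 h.2 hd₁ hd₂ hc₁)
  · rintro (h | h)
    · obtain ⟨e, w, he, hw, hc₁, hc₂⟩ := exists_energy_for_bandwidth_trade hμ₁ hl₁ hl₂ h
      exact ⟨e, 0, 0, w, he, le_rfl, le_rfl, hw, by linarith, by linarith⟩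
    · obtain ⟨e, w, he, hw, hc₂, hc₁⟩ := exists_energy_for_bandwidth_trade hμ₂ hl₂ hl₁ h
      exact ⟨0, e, w, 0, le_rfl, he, hw, le_rfl, by linarith, by linarith⟩

/-- With `v₁ = (μ₁, −βE·μ₁, λ₁, −λ₁)` and `v₂ = (−βE·μ₂, μ₂, −λ₂, λ₂)`,
there is a componentwise-nonnegative direction `d` with `⟨v₁,d⟩ < 0` and `⟨v₂,d⟩ < 0`
iff `βE·λ₁·μ₂ > λ₂·μ₁` or `βE·λ₂·μ₁ > λ₁·μ₂` (partial-cooperation condition when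
`e₁ = e₂ = 0`). -/
theorem partial_cooperation_condition_no_energy_exchange
    (μ₁ μ₂ l₁ l₂ βE : ℝ) (hμ₁ : 0 < μ₁) (hμ₂ : 0 < μ₂) (hl₁ : 0 < l₁) (hl₂ : 0 < l₂)
    (hβE₀ : 0 < βE) (hβE₁ : βE ≤ 1) :
    (∃ d₁ d₂ d₃ d₄ : ℝ, 0 ≤ d₁ ∧ 0 ≤ d₂ ∧ 0 ≤ d₃ ∧ 0 ≤ d₄ ∧
      μ₁ * d₁ + (-(βE * μ₁)) * d₂ + l₁ * d₃ + (-l₁) * d₄ < 0 ∧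
      (-(βE * μ₂)) * d₁ + μ₂ * d₂ + (-l₂) * d₃ + l₂ * d₄ < 0) ↔
    (βE * l₁ * μ₂ > l₂ * μ₁ ∨ βE * l₂ * μ₁ > l₁ * μ₂) :=
  partial_cooperation_condition_no_energy_exchange_general μ₁ μ₂ l₁ l₂ βE hμ₁ hμ₂ hl₁ hl₂
end

section
/- Let μ₁, μ₂, λ₁, λ₂ > 0 and 0 < β_E ≤ 1, and define v₁ = (μ₁, −β_E·μ₁, λ₁, −λ₁) and v₂ = (−β_E·μ₂, μ₂, −λ₂, λ₂) in ℝ⁴. Then there exists a direction d = (d₁, d₂, d₃, d₄) ∈ ℝ⁴ with d₁ ∈ ℝ arbitrary and d₂, d₃, d₄ ≥ 0 such that ⟨v₁, d⟩ < 0 and ⟨v₂, d⟩ < 0 if and only if β_E·λ₁·μ₂ ≠ λ₂·μ₁. (This is the partial-cooperation condition of Proposition 5.2 when e₁ > 0: both systems' costs can be simultaneously decreased if and only if λ₁/μ₁ ≠ λ₂/(μ₂·β_E).) -/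
/-!
Weighting the two first-order cost changes by `βE μ₂ > 0` and `μ₁ > 0` gives
`μ₁ μ₂ (1 - βE²) d₂ + (βE l₁ μ₂ - l₂ μ₁) (d₃ - d₄)`. If `βE l₁ μ₂ = l₂ μ₁` this is nonnegative
because `βE ≤ 1` and `d₂ ≥ 0`, so the two changes cannot both be negative. Otherwise a common
descent direction has `d₂ = 0` and one of `d₃`, `d₄` equal to `1`, the other `0`: the two
conditions then bound `d₁` from above and below, and these bounds are compatible exactly on the
corresponding side of `βE l₁ μ₂ = l₂ μ₁`.
-/

lemma weighted_sum_cost_changes (μ₁ μ₂ l₁ l₂ βE d₁ d₂ d₃ d₄ : ℝ) :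
    βE * μ₂ * (μ₁ * d₁ + (-(βE * μ₁)) * d₂ + l₁ * d₃ + (-l₁) * d₄) +
      μ₁ * ((-(βE * μ₂)) * d₁ + μ₂ * d₂ + (-l₂) * d₃ + l₂ * d₄) =
    μ₁ * μ₂ * (1 - βE ^ 2) * d₂ + (βE * l₁ * μ₂ - l₂ * μ₁) * (d₃ - d₄) := by
  ring

lemma exists_mul_add_neg_and_neg_mul_add_neg {a b c e : ℝ} (ha : 0 < a) (hc : 0 < c)
    (h : b * c + a * e < 0) : ∃ x, a * x + b < 0 ∧ -(c * x) + e < 0 := by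
  have hbounds : e / c < -b / a := by
    rw [div_lt_div_iff₀ hc ha]
    linarith
  obtain ⟨x, hex, hxb⟩ := exists_between hbounds
  refine ⟨x, ?_, ?_⟩
  · rw [lt_div_iff₀ ha] at hxb
    linarith
  · rw [div_lt_iff₀ hc] at hex
    linarith

theorem partial_cooperation_condition_positive_energy_exchange_general
    (μ₁ μ₂ l₁ l₂ βE : ℝ) (hμ₁ : 0 < μ₁) (hμ₂ : 0 < μ₂)
    (hβE₀ : 0 < βE) (hβE₁ : βE ≤ 1) :
    (∃ d₁ d₂ d₃ d₄ : ℝ, 0 ≤ d₂ ∧ 0 ≤ d₃ ∧ 0 ≤ d₄ ∧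
      μ₁ * d₁ + (-(βE * μ₁)) * d₂ + l₁ * d₃ + (-l₁) * d₄ < 0 ∧
      (-(βE * μ₂)) * d₁ + μ₂ * d₂ + (-l₂) * d₃ + l₂ * d₄ < 0) ↔
    βE * l₁ * μ₂ ≠ l₂ * μ₁ := by
  have hc : 0 < βE * μ₂ := mul_pos hβE₀ hμ₂
  constructor
  · rintro ⟨d₁, d₂, d₃, d₄, hd₂, -, -, h₁, h₂⟩ heq
    have hsum := weighted_sum_cost_changes μ₁ μ₂ l₁ l₂ βE d₁ d₂ d₃ d₄
    rw [heq, sub_self, zero_mul, add_zero] at hsum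
    have hβE_sq : βE ^ 2 ≤ 1 := pow_le_one₀ hβE₀.le hβE₁
    have hnonneg : 0 ≤ μ₁ * μ₂ * (1 - βE ^ 2) * d₂ :=
      mul_nonneg (mul_nonneg (mul_pos hμ₁ hμ₂).le (sub_nonneg.mpr hβE_sq)) hd₂
    have hneg := add_neg (mul_neg_of_pos_of_neg hc h₁) (mul_neg_of_pos_of_neg hμ₁ h₂)
    linarith
  · intro hne
    rcases hne.lt_or_gt with hlt | hgt
    · obtain ⟨x, h₁, h₂⟩ :=
        exists_mul_add_neg_and_neg_mul_add_neg (b := l₁) (e := -l₂) hμ₁ hc (by linarith)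
      exact ⟨x, 0, 1, 0, le_rfl, zero_le_one, le_rfl, by linarith, by linarith⟩
    · obtain ⟨x, h₁, h₂⟩ :=
        exists_mul_add_neg_and_neg_mul_add_neg (b := -l₁) (e := l₂) hμ₁ hc (by linarith)
      exact ⟨x, 0, 0, 1, le_rfl, le_rfl, zero_le_one, by linarith, by linarith⟩

/-- With `v₁ = (μ₁, −βE·μ₁, λ₁, −λ₁)` and `v₂ = (−βE·μ₂, μ₂, −λ₂, λ₂)`,
there is a direction `d = (d₁,d₂,d₃,d₄)` with `d₁ ∈ ℝ` arbitrary and `d₂,d₃,d₄ ≥ 0`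
such that `⟨v₁,d⟩ < 0` and `⟨v₂,d⟩ < 0` iff `βE·λ₁·μ₂ ≠ λ₂·μ₁` (partial-cooperation
condition when `e₁ > 0`). -/
theorem partial_cooperation_condition_positive_energy_exchange
    (μ₁ μ₂ l₁ l₂ βE : ℝ) (hμ₁ : 0 < μ₁) (hμ₂ : 0 < μ₂) (hl₁ : 0 < l₁) (hl₂ : 0 < l₂)
    (hβE₀ : 0 < βE) (hβE₁ : βE ≤ 1) :
    (∃ d₁ d₂ d₃ d₄ : ℝ, 0 ≤ d₂ ∧ 0 ≤ d₃ ∧ 0 ≤ d₄ ∧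
      μ₁ * d₁ + (-(βE * μ₁)) * d₂ + l₁ * d₃ + (-l₁) * d₄ < 0 ∧
      (-(βE * μ₂)) * d₁ + μ₂ * d₂ + (-l₂) * d₃ + l₂ * d₄ < 0) ↔
    βE * l₁ * μ₂ ≠ l₂ * μ₁ :=
  partial_cooperation_condition_positive_energy_exchange_general μ₁ μ₂ l₁ l₂ βE hμ₁ hμ₂ hβE₀ hβE₁
end

section
/- Let μ₁, μ₂, λ₁, λ₂ > 0, β_E > 0 and ρ > 0. Define v₁ = (μ₁, −β_E·μ₁, λ₁, −λ₁), v₂ = (−β_E·μ₂, μ₂, −λ₂, λ₂), s = sign(β_E·λ₁·μ₂ − λ₂·μ₁) ∈ {−1, 1} (with sign(t) = 1 for t ≥ 0 and −1 for t < 0), and the update direction d = s·(ρ·λ₂ + λ₁, 0, 0, μ₁ + ρ·β_E·μ₂). Then ⟨v₁, d⟩ = σ·ρ and ⟨v₂, d⟩ = σ, where σ = −|β_E·λ₁·μ₂ − λ₂·μ₁| ≤ 0. In particular, the update direction used in the distributed algorithm reduces the two systems' costs in the exact ratio ρ : 1. -/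
theorem ite_nonneg_one_neg_one_mul_self {α : Type*} [Ring α] [LinearOrder α] [IsOrderedRing α]
    (t : α) : (if 0 ≤ t then 1 else -1) * t = |t| := by
  split_ifs with ht
  · rw [one_mul, abs_of_nonneg ht]
  · rw [neg_one_mul, abs_of_neg (not_le.mp ht)]

theorem distributed_update_ratio_general (μ₁ μ₂ l₁ l₂ βE ρ : ℝ) :
    let s : ℝ := if 0 ≤ βE * l₁ * μ₂ - l₂ * μ₁ then 1 else -1
    let σ : ℝ := -|βE * l₁ * μ₂ - l₂ * μ₁|
    let d₁ : ℝ := s * (ρ * l₂ + l₁)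
    let d₄ : ℝ := s * (μ₁ + ρ * βE * μ₂)
    (μ₁ * d₁ + (-(βE * μ₁)) * 0 + l₁ * 0 + (-l₁) * d₄ = σ * ρ) ∧
    ((-(βE * μ₂)) * d₁ + μ₂ * 0 + (-l₂) * 0 + l₂ * d₄ = σ) ∧
    σ ≤ 0 := by
  intro s σ d₁ d₄
  -- Both inner products are `-s·t` times `ρ` resp. `1`, where `t = βE·l₁·μ₂ − l₂·μ₁`.
  have hs : s * (βE * l₁ * μ₂ - l₂ * μ₁) = |βE * l₁ * μ₂ - l₂ * μ₁| :=
    ite_nonneg_one_neg_one_mul_self _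
  refine ⟨?_, ?_, neg_nonpos.mpr (abs_nonneg _)⟩
  · linear_combination (-ρ) * hs
  · linear_combination (-1 : ℝ) * hs

/-- With `s = sign(βE·λ₁·μ₂ − λ₂·μ₁)` and the update direction
`d = s·(ρ·λ₂ + λ₁, 0, 0, μ₁ + ρ·βE·μ₂)`, the first-order cost changes are
`⟨v₁,d⟩ = σ·ρ` and `⟨v₂,d⟩ = σ` with `σ = −|βE·λ₁·μ₂ − λ₂·μ₁| ≤ 0`; i.e. the
distributed algorithm reduces the two systems' costs in the exact ratio `ρ : 1`. -/
theorem distributed_update_ratio (μ₁ μ₂ l₁ l₂ βE ρ : ℝ)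
    (hμ₁ : 0 < μ₁) (hμ₂ : 0 < μ₂) (hl₁ : 0 < l₁) (hl₂ : 0 < l₂)
    (hβE : 0 < βE) (hρ : 0 < ρ) :
    let s : ℝ := if 0 ≤ βE * l₁ * μ₂ - l₂ * μ₁ then 1 else -1
    let σ : ℝ := -|βE * l₁ * μ₂ - l₂ * μ₁|
    let d₁ : ℝ := s * (ρ * l₂ + l₁)
    let d₄ : ℝ := s * (μ₁ + ρ * βE * μ₂)
    (μ₁ * d₁ + (-(βE * μ₁)) * 0 + l₁ * 0 + (-l₁) * d₄ = σ * ρ) ∧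
    ((-(βE * μ₂)) * d₁ + μ₂ * 0 + (-l₂) * 0 + l₂ * d₄ = σ) ∧
    σ ≤ 0 :=
  distributed_update_ratio_general μ₁ μ₂ l₁ l₂ βE ρ
end

section
/- Let μ₁, μ₂, λ₁, λ₂ > 0 and 0 < β_E ≤ 1. Then there exist Δe₁ > 0 and Δw₂ > 0 such that μ₁·Δe₁ − λ₁·Δw₂ < 0 and λ₂·Δw₂ − β_E·μ₂·Δe₁ < 0 if and only if β_E·λ₁·μ₂ > λ₂·μ₁. (Equivalently, a bidirectional exchange in which system 1 shares Δe₁ energy and system 2 shares Δw₂ bandwidth strictly reduces both systems' first-order costs if and only if λ₁/μ₁ > λ₂/(μ₂·β_E); this is the partial-cooperation feasibility condition of Corollary 5.1.) -/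
/-- There exist `Δe₁ > 0` and `Δw₂ > 0` with
`μ₁·Δe₁ − λ₁·Δw₂ < 0` and `λ₂·Δw₂ − βE·μ₂·Δe₁ < 0` iff `βE·λ₁·μ₂ > λ₂·μ₁`
(the partial-cooperation feasibility condition of Corollary 5.1). -/
theorem bidirectional_exchange_condition (μ₁ μ₂ l₁ l₂ βE : ℝ)
    (hμ₁ : 0 < μ₁) (hμ₂ : 0 < μ₂) (hl₁ : 0 < l₁) (hl₂ : 0 < l₂)
    (hβE₀ : 0 < βE) (hβE₁ : βE ≤ 1) :
    (∃ Δe₁ Δw₂ : ℝ, 0 < Δe₁ ∧ 0 < Δw₂ ∧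
      μ₁ * Δe₁ - l₁ * Δw₂ < 0 ∧ l₂ * Δw₂ - βE * μ₂ * Δe₁ < 0) ↔
    βE * l₁ * μ₂ > l₂ * μ₁ := by
  constructor
  · rintro ⟨e, w, he, hw, h1, h2⟩
    nlinarith [mul_pos he hw, mul_pos hl₁ hl₂]
  · intro h
    refine ⟨1, (μ₁ / l₁ + βE * μ₂ / l₂) / 2, one_pos, by positivity, ?_, ?_⟩
    · have : μ₁ / l₁ < βE * μ₂ / l₂ := by
        rw [div_lt_div_iff₀ hl₁ hl₂]; nlinarith
      have h2 : μ₁ / l₁ < (μ₁ / l₁ + βE * μ₂ / l₂) / 2 := by linarith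
      have := (div_lt_iff₀ hl₁).mp h2
      nlinarith
    · have : μ₁ / l₁ < βE * μ₂ / l₂ := by
        rw [div_lt_div_iff₀ hl₁ hl₂]; nlinarith
      have h2 : (μ₁ / l₁ + βE * μ₂ / l₂) / 2 < βE * μ₂ / l₂ := by linarith
      have := (lt_div_iff₀ hl₂).mp h2
      nlinarith
end
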